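/- arXiv:1911.06649 — 4 statements merged into one kernel-verified Lean document; each statement's English description precedes it below -/
import Mathlib

section
/- Let (a_m)_{m∈ℕ} be a sequence of complex numbers. Then, as formal power series in t over ℂ, ∑_{n≥0} (t^n/n!) ∑_{σ∈S_n} ∏_{j=1}^n a_j^{C_j(σ)} = exp(∑_{k≥1} (a_k/k) t^k); equivalently, for every n ≥ 0, (1/n!) ∑_{σ∈S_n} ∏_{j=1}^n a_j^{C_j(σ)} equals the coefficient of t^n in exp(∑_{k≥1} (a_k/k) t^k). -/
open Filter Nat
open scoped BigOperators

noncomputable section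

/-- `cycNum n σ k` is the number of cycles of length `k` in the cycle decomposition
of the permutation `σ` of `{1,…,n}` (fixed points count as cycles of length 1). -/
def cycNum (n : ℕ) (σ : Equiv.Perm (Fin n)) (k : ℕ) : ℕ :=
  if k = 1 then n - σ.support.card else Multiset.count k σ.cycleType

/-- The `n`-th coefficient of `exp g = ∑_m g^m / m!` for a formal power series `g`
over `ℂ` (the sum of coefficients is a convergent, in fact finite, sum whenever the
constant term of `g` vanishes). -/
def expCoeffC (g : PowerSeries ℂ) (n : ℕ) : ℂ :=
  ∑' m : ℕ, (m ! : ℂ)⁻¹ * PowerSeries.coeff (R := ℂ) n (g ^ m)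

/-!
Let `s_n = (1/n!) ∑_{σ ∈ S_n} ∏_j a_j ^ C_j(σ)` and `g = ∑_{k ≥ 1} (a_k/k) t^k`.
Count pairs `(x, σ)` of a point and a permutation by the cycle `c` of `σ` through `x`:
removing `c` leaves an arbitrary permutation of the `n - k` points outside `c`, where
`k` is the length of `c`, and there are `n!/(n-k)!` pairs `(x, c)` with `c` of length `k`.
Hence `n s_n = ∑_{k=1}^n a_k s_{n-k}`, i.e. `S = ∑ s_n t^n` solves `S' = g' S`, `S(0) = 1`.
So does `exp g`, and this initial value problem has a unique power series solution.
-/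

open Finset PowerSeries

namespace Equiv.Perm

theorem ofSubtype_permCongr {α β : Type*} {p : α → Prop} [DecidablePred p]
    (f : β ≃ Subtype p) (σ : Perm β) : ofSubtype (f.permCongr σ) = σ.extendDomain f := by
  ext x
  by_cases hx : p x
  · simp [ofSubtype_apply_of_mem _ hx, extendDomain_apply_subtype _ _ hx, permCongr_apply]
  · simp [ofSubtype_apply_of_not_mem _ hx, extendDomain_apply_not_subtype _ _ hx]

variable {α : Type*} [Fintype α] [DecidableEq α]

theorem disjoint_of_forall_mem_support {c τ : Perm α} (h : ∀ y ∈ c.support, τ y = y) :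
    Disjoint c τ := fun y =>
  if hy : y ∈ c.support then .inr (h y hy) else .inl (notMem_support.mp hy)

theorem cycleOf_eq_self_iff {c : Perm α} {x : α} :
    c.cycleOf x = c ↔ c = 1 ∨ c.IsCycle ∧ x ∈ c.support := by
  constructor
  · intro h
    by_cases hx : c x = x
    · exact .inl (h ▸ (cycleOf_eq_one_iff c).mpr hx)
    · exact .inr ⟨h ▸ isCycle_cycleOf c hx, mem_support.mpr hx⟩
  · rintro (rfl | ⟨hc, hx⟩)
    · exact cycleOf_one x
    · exact hc.cycleOf_eq (mem_support.mp hx)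

theorem cycleOf_cycleOf (σ : Perm α) (x : α) : (σ.cycleOf x).cycleOf x = σ.cycleOf x := by
  refine cycleOf_eq_self_iff.mpr ?_
  by_cases hx : σ x = x
  · exact .inl ((cycleOf_eq_one_iff σ).mpr hx)
  · exact .inr ⟨isCycle_cycleOf σ hx,
      mem_support_cycleOf_iff.mpr ⟨.refl σ x, mem_support.mpr hx⟩⟩

section Counting

variable {M : Type*} [AddCommMonoid M]

open Classical in
theorem sum_cycleOf_eq_self (c : Perm α) (F : ℕ → M) :
    ∑ x with c.cycleOf x = c, F #(insert x c.support) =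
      (if c = 1 then Fintype.card α • F 1 else 0) +
        if c.IsCycle then #c.support • F #c.support else 0 := by
  simp_rw [cycleOf_eq_self_iff]
  by_cases h1 : c = 1
  · subst h1
    simp [not_isCycle_one]
  by_cases hc : c.IsCycle
  · simp only [h1, hc, false_or, true_and, if_false, if_true, zero_add, filter_mem_eq_inter,
      univ_inter]
    rw [sum_congr rfl fun x hx => by rw [insert_eq_of_mem hx], sum_const]
  · simp [h1, hc]

open Classical in
theorem sum_isCycle_card_support (G : ℕ → M) :
    ∑ c : Perm α with c.IsCycle, G #c.support =
      ∑ k ∈ Icc 2 (Fintype.card α), #{c : Perm α | c.cycleType = {k}} • G k := by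
  rw [← sum_fiberwise_of_maps_to (g := fun c : Perm α => #c.support)
    (t := Icc 2 (Fintype.card α))]
  · refine sum_congr rfl fun k hk => ?_
    have hct (c : Perm α) : c.IsCycle ∧ #c.support = k ↔ c.cycleType = {k} := by
      refine ⟨fun ⟨hc, hk⟩ => hk ▸ hc.cycleType, fun h => ⟨?_, ?_⟩⟩
      · exact card_cycleType_eq_one.mp (by simp [h])
      · rw [← sum_cycleType, h, Multiset.sum_singleton]
    rw [filter_filter, filter_congr fun c _ => hct c, ← sum_const]
    exact sum_congr rfl fun c hc => by
      rw [← sum_cycleType, (mem_filter.mp hc).2, Multiset.sum_singleton]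
  · intro c hc
    exact mem_Icc.mpr ⟨(mem_filter.mp hc).2.two_le_card_support, card_le_univ _⟩

open Classical in
theorem sum_sum_cycleOf_eq_self (F : ℕ → M) :
    ∑ x : α, ∑ c : Perm α with c.cycleOf x = c, F #(insert x c.support) =
      ∑ k ∈ Icc 1 (Fintype.card α), (Fintype.card α).descFactorial k • F k := by
  set N := Fintype.card α
  have hcount {k : ℕ} (hk : k ∈ Icc 2 N) :
      #{c : Perm α | c.cycleType = {k}} * k = N.descFactorial k := by
    rw [card_of_cycleType_singleton (mem_Icc.mp hk).1 (mem_Icc.mp hk).2, mul_comm, ← mul_assoc,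
      mul_factorial_pred (by grind), descFactorial_eq_factorial_mul_choose]
  calc ∑ x : α, ∑ c : Perm α with c.cycleOf x = c, F #(insert x c.support)
      = ∑ c : Perm α, ∑ x with c.cycleOf x = c, F #(insert x c.support) := sum_comm' (by simp)
    _ = N • F 1 + ∑ c : Perm α with c.IsCycle, #c.support • F #c.support := by
        simp_rw [sum_cycleOf_eq_self, sum_add_distrib, sum_ite_eq', mem_univ, if_true,
          sum_filter, N]
    _ = N • F 1 + ∑ k ∈ Icc 2 N, N.descFactorial k • F k := by
        rw [sum_isCycle_card_support fun k => k • F k]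
        exact congrArg _ (sum_congr rfl fun k hk => by rw [smul_smul, hcount hk])
    _ = ∑ k ∈ Icc 1 N, N.descFactorial k • F k := by
        rcases Nat.eq_zero_or_pos N with hN | hN
        · simp [hN]
        · rw [← insert_Icc_succ_left_eq_Icc (show 1 ≤ N from hN), sum_insert (by simp),
            descFactorial_one]
          rfl

end Counting

variable {R : Type*} [CommSemiring R] (a : ℕ → R)

/-- `∏_j a_j ^ C_j(σ)` for `σ` viewed as a permutation of an `m`-element set containing its
support, so that `σ` has `m - #σ.support` fixed points. -/
def cycleWeight (m : ℕ) (σ : Perm α) : R :=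
  a 1 ^ (m - #σ.support) * (σ.cycleType.map a).prod

def totalCycleWeight (n : ℕ) : R :=
  ∑ σ : Perm (Fin n), cycleWeight a n σ

theorem prod_pow_cycNum {n : ℕ} (σ : Perm (Fin n)) :
    ∏ j ∈ Icc 1 n, a j ^ cycNum n σ j = cycleWeight a n σ := by
  have hcount (j : ℕ) : cycNum n σ j = σ.partition.parts.count j := by
    have h1 : σ.cycleType.count 1 = 0 :=
      Multiset.count_eq_zero.mpr fun h => (one_lt_of_mem_cycleType h).false
    by_cases hj : j = 1 <;>
      simp [cycNum, parts_partition, Multiset.count_replicate, hj, h1, eq_comm]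
  have hsub : σ.partition.parts.toFinset ⊆ Icc 1 n := fun j hj => by
    rw [Multiset.mem_toFinset] at hj
    exact mem_Icc.mpr
      ⟨σ.partition.parts_pos hj, by simpa using Nat.Partition.le_of_mem_parts hj⟩
  simp_rw [hcount]
  rw [← prod_subset hsub fun j _ hj => by
      rw [Multiset.count_eq_zero.mpr (by simpa using hj), pow_zero],
    ← prod_multiset_map_count, parts_partition, Multiset.map_add, Multiset.prod_add,
    Multiset.map_replicate, Multiset.prod_replicate, Fintype.card_fin, cycleWeight, mul_comm]

theorem totalCycleWeight_zero : totalCycleWeight a 0 = 1 := by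
  simp [totalCycleWeight, cycleWeight]

theorem cycleWeight_extendDomain {β : Type*} [Fintype β] [DecidableEq β] {p : α → Prop}
    [DecidablePred p] (f : β ≃ Subtype p) (m : ℕ) (σ : Perm β) :
    cycleWeight a m (σ.extendDomain f) = cycleWeight a m σ := by
  simp [cycleWeight, cycleType_extendDomain]

theorem sum_cycleWeight_of_forall_mem_fixed (T : Finset α) :
    ∑ τ : Perm α with ∀ y ∈ T, τ y = y, cycleWeight a #Tᶜ τ =
      totalCycleWeight a #Tᶜ := by
  let f : Fin #Tᶜ ≃ {y // y ∉ T} := (Fintype.equivFinOfCardEq (by simp [card_compl])).symm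
  let e := f.permCongr.trans (Perm.subtypeEquivSubtypePerm (· ∉ T))
  calc ∑ τ : Perm α with ∀ y ∈ T, τ y = y, cycleWeight a #Tᶜ τ
      = ∑ τ : {τ : Perm α // ∀ y, ¬y ∉ T → τ y = y}, cycleWeight a #Tᶜ τ.1 :=
        Finset.sum_subtype _ (by simp) _
    _ = ∑ σ, cycleWeight a #Tᶜ (e σ).1 := (e.sum_comp _).symm
    _ = totalCycleWeight a #Tᶜ := by
        refine Fintype.sum_congr _ _ fun σ => ?_
        simp [e, ofSubtype_permCongr, cycleWeight_extendDomain]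

variable {a} {c τ : Perm α} {x : α}

theorem cycleWeight_cycleOf_mul (hc : c.cycleOf x = c)
    (hτ : ∀ y ∈ insert x c.support, τ y = y) :
    cycleWeight a (Fintype.card α) (c * τ) =
      a #(insert x c.support) * cycleWeight a (Fintype.card α - #(insert x c.support)) τ := by
  have hdisj := disjoint_of_forall_mem_support fun y hy => hτ y (mem_insert_of_mem hy)
  have hcard : #τ.support + #(insert x c.support) ≤ Fintype.card α := by
    have hsub : τ.support ⊆ (insert x c.support)ᶜ := fun y hy =>
      mem_compl.mpr fun hyT => mem_support.mp hy (hτ y hyT)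
    have := card_le_card hsub
    rw [card_compl] at this
    have := card_le_univ (insert x c.support)
    omega
  rcases cycleOf_eq_self_iff.mp hc with rfl | ⟨hcyc, hx⟩
  · simp only [one_mul, support_one, insert_empty, card_singleton, cycleWeight] at hcard ⊢
    rw [show Fintype.card α - #τ.support = Fintype.card α - 1 - #τ.support + 1 by omega,
      pow_succ]
    ring
  · rw [insert_eq_of_mem hx] at hcard ⊢
    rw [cycleWeight, cycleWeight, hdisj.card_support_mul, hdisj.cycleType_mul, hcyc.cycleType,
      Multiset.map_add, Multiset.prod_add, Multiset.map_singleton, Multiset.prod_singleton,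
      Nat.sub_add_eq]
    ring

theorem sum_cycleWeight_cycleOf_eq (hc : c.cycleOf x = c) :
    ∑ σ : Perm α with σ.cycleOf x = c, cycleWeight a (Fintype.card α) σ =
      a #(insert x c.support) * totalCycleWeight a (Fintype.card α - #(insert x c.support)) := by
  set T := insert x c.support
  have hfix {σ : Perm α} (hσ : σ.cycleOf x = c) : ∀ y ∈ T, (c⁻¹ * σ) y = y := by
    intro y hy
    have hxy : σ.SameCycle x y := by
      rcases mem_insert.mp hy with rfl | hy
      · exact .refl σ y
      · exact (mem_support_cycleOf_iff.mp (hσ ▸ hy)).1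
    rw [mul_apply, inv_eq_iff_eq, ← hσ, hxy.cycleOf_apply]
  have hcycleOf {τ : Perm α} (hτ : ∀ y ∈ T, τ y = y) : (c * τ).cycleOf x = c := by
    have hdisj := disjoint_of_forall_mem_support fun y hy => hτ y (mem_insert_of_mem hy)
    rw [cycleOf_mul_of_apply_right_eq_self hdisj.commute x (hτ x (mem_insert_self x _)), hc]
  calc ∑ σ : Perm α with σ.cycleOf x = c, cycleWeight a (Fintype.card α) σ
      = ∑ τ : Perm α with ∀ y ∈ T, τ y = y, cycleWeight a (Fintype.card α) (c * τ) := by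
        refine sum_nbij' (c⁻¹ * ·) (c * ·) ?_ ?_ ?_ ?_ ?_ <;> simp_all
    _ = ∑ τ : Perm α with ∀ y ∈ T, τ y = y, a #T * cycleWeight a #Tᶜ τ := by
        refine sum_congr rfl fun τ hτ => ?_
        rw [card_compl, cycleWeight_cycleOf_mul hc (mem_filter.mp hτ).2]
    _ = a #T * totalCycleWeight a (Fintype.card α - #T) := by
        rw [← mul_sum, sum_cycleWeight_of_forall_mem_fixed, card_compl]

variable (a)

theorem sum_cycleWeight_eq_sum_cycleOf (x : α) :
    ∑ σ : Perm α, cycleWeight a (Fintype.card α) σ =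
      ∑ c : Perm α with c.cycleOf x = c,
        a #(insert x c.support) * totalCycleWeight a (Fintype.card α - #(insert x c.support)) := by
  rw [← sum_fiberwise_of_maps_to (g := fun σ : Perm α => σ.cycleOf x)
    (t := {c : Perm α | c.cycleOf x = c})
    fun σ _ => mem_filter.mpr ⟨mem_univ _, cycleOf_cycleOf σ x⟩]
  exact sum_congr rfl fun c hc => sum_cycleWeight_cycleOf_eq (mem_filter.mp hc).2

theorem card_mul_sum_cycleWeight :
    (Fintype.card α : R) * ∑ σ : Perm α, cycleWeight a (Fintype.card α) σ =
      ∑ k ∈ Icc 1 (Fintype.card α),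
        ((Fintype.card α).descFactorial k : R) *
          (a k * totalCycleWeight a (Fintype.card α - k)) := by
  calc (Fintype.card α : R) * ∑ σ : Perm α, cycleWeight a (Fintype.card α) σ
      = ∑ x : α, ∑ σ : Perm α, cycleWeight a (Fintype.card α) σ := by
        rw [sum_const, Finset.card_univ, nsmul_eq_mul]
    _ = ∑ x : α, ∑ c : Perm α with c.cycleOf x = c,
          a #(insert x c.support) * totalCycleWeight a (Fintype.card α - #(insert x c.support)) :=
        sum_congr rfl fun x _ => sum_cycleWeight_eq_sum_cycleOf a x
    _ = _ := by
        rw [sum_sum_cycleOf_eq_self fun k => a k * totalCycleWeight a (Fintype.card α - k)]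
        simp_rw [nsmul_eq_mul]

end Equiv.Perm

namespace PowerSeries

theorem eq_of_derivative_eq_mul_self {R : Type*} [CommRing R] [IsAddTorsionFree R]
    {f g h : R⟦X⟧} (hf : d⁄dX R f = h * f) (hg : d⁄dX R g = h * g)
    (h0 : constantCoeff f = constantCoeff g) : f = g := by
  ext n
  induction n using Nat.strong_induction_on with
  | _ n ih =>
    rcases n with _ | n
    · simpa using h0
    have hfg : coeff n (d⁄dX R f) = coeff n (d⁄dX R g) := by
      rw [hf, hg, coeff_mul, coeff_mul]
      refine sum_congr rfl fun p hp => ?_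
      rw [ih p.2 (by rw [HasAntidiagonal.mem_antidiagonal] at hp; omega)]
    rw [coeff_derivative, coeff_derivative, ← Nat.cast_succ, mul_comm, ← nsmul_eq_mul, mul_comm,
      ← nsmul_eq_mul] at hfg
    exact (smul_right_inj n.succ_ne_zero).mp hfg

theorem derivative_subst_exp {A : Type*} [CommRing A] [Algebra ℚ A] {g : A⟦X⟧}
    (hg : HasSubst g) : d⁄dX A ((exp A).subst g) = d⁄dX A g * (exp A).subst g := by
  rw [derivative_subst hg, derivative_exp, mul_comm]

theorem derivative_mk_div_natCast {K : Type*} [Field K] [CharZero K] (a : ℕ → K) :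
    d⁄dX K (mk fun k => if k = 0 then 0 else a k / (k : K)) = mk fun k => a (k + 1) := by
  ext k
  rw [coeff_derivative, coeff_mk, coeff_mk, if_neg k.succ_ne_zero, Nat.cast_succ,
    div_mul_cancel₀ _ k.cast_add_one_ne_zero]

end PowerSeries

theorem Finset.sum_Icc_one_succ_eq_sum_antidiagonal {M : Type*} [AddCommMonoid M]
    (f : ℕ → ℕ → M) (n : ℕ) :
    ∑ k ∈ Icc 1 (n + 1), f k (n + 1 - k) = ∑ p ∈ antidiagonal n, f (p.1 + 1) p.2 := by
  rw [Nat.sum_antidiagonal_eq_sum_range_succ_mk, ← Ico_add_one_right_eq_Icc, sum_Ico_eq_sum_range]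
  exact sum_congr (by simp) fun k _ => by rw [add_comm 1 k, Nat.add_sub_add_right]

open Equiv.Perm

theorem totalCycleWeight_succ_div_factorial {K : Type*} [Field K] [CharZero K] (a : ℕ → K)
    (n : ℕ) :
    totalCycleWeight a (n + 1) / (n + 1)! * (n + 1) =
      ∑ p ∈ antidiagonal n, a (p.1 + 1) * (totalCycleWeight a p.2 / p.2 !) := by
  have hrec := card_mul_sum_cycleWeight a (α := Fin (n + 1))
  simp only [Fintype.card_fin, Nat.cast_add_one] at hrec
  rw [← sum_Icc_one_succ_eq_sum_antidiagonal fun k m => a k * (totalCycleWeight a m / m !),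
    div_mul_eq_mul_div, mul_comm, totalCycleWeight, hrec, sum_div]
  refine sum_congr rfl fun k hk => ?_
  have hfac : ((n + 1 - k)! : K) * (n + 1).descFactorial k = (n + 1)! := by
    exact_mod_cast factorial_mul_descFactorial (mem_Icc.mp hk).2
  have hdesc : ((n + 1).descFactorial k : K) ≠ 0 := by
    exact_mod_cast (descFactorial_pos.mpr (mem_Icc.mp hk).2).ne'
  rw [← hfac, mul_comm (_ ! : K), mul_div_mul_left _ _ hdesc, mul_div_assoc]

theorem derivative_mk_totalCycleWeight {K : Type*} [Field K] [CharZero K] (a : ℕ → K) :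
    d⁄dX K (mk fun n => totalCycleWeight a n / n !) =
      (mk fun k => a (k + 1)) * mk fun n => totalCycleWeight a n / n ! := by
  ext n
  simpa [coeff_derivative, coeff_mul] using totalCycleWeight_succ_div_factorial a n

theorem expCoeffC_eq_coeff_subst_exp {g : ℂ⟦X⟧} (hg : constantCoeff g = 0) (n : ℕ) :
    expCoeffC g n = coeff n ((exp ℂ).subst g) := by
  have hs : HasSubst g := HasSubst.of_constantCoeff_zero' hg
  have hterm : (fun m : ℕ => (m ! : ℂ)⁻¹ * coeff n (g ^ m)) =
      fun m => coeff m (exp ℂ) • coeff n (g ^ m) := by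
    ext m
    simp [coeff_exp]
  rw [expCoeffC, coeff_subst' hs, hterm, tsum_eq_finsum (coeff_subst_finite' hs _ n)]

theorem expCoeffC_zero {g : ℂ⟦X⟧} (hg : constantCoeff g = 0) : expCoeffC g 0 = 1 := by
  rw [expCoeffC, tsum_eq_single 0 fun m hm => by simp [coeff_zero_eq_constantCoeff, hg, hm]]
  simp

/-- Pólya's enumeration theorem: as formal power series in `t`,
`∑_n (tⁿ/n!) ∑_{σ ∈ S_n} ∏_j a_j^{C_j(σ)} = exp (∑_{k ≥ 1} (a_k/k) t^k)`, i.e. for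
every `n`, `(1/n!) ∑_{σ ∈ S_n} ∏_j a_j^{C_j(σ)}` is the `n`-th coefficient of the
right-hand side. -/
theorem polya_enumeration (a : ℕ → ℂ) (n : ℕ) :
    (n ! : ℂ)⁻¹ * ∑ σ : Equiv.Perm (Fin n), ∏ j ∈ Finset.Icc 1 n, a j ^ cycNum n σ j
      = expCoeffC (PowerSeries.mk fun k => if k = 0 then 0 else a k / (k : ℂ)) n := by
  set g : ℂ⟦X⟧ := mk fun k => if k = 0 then 0 else a k / (k : ℂ)
  have hg : constantCoeff g = 0 := by simp [g]
  have hode : (mk fun m => totalCycleWeight a m / m !) = (exp ℂ).subst g := by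
    refine eq_of_derivative_eq_mul_self (derivative_mk_totalCycleWeight a) ?_ ?_
    · rw [derivative_subst_exp (HasSubst.of_constantCoeff_zero' hg), derivative_mk_div_natCast]
    · rw [← coeff_zero_eq_constantCoeff_apply, ← coeff_zero_eq_constantCoeff_apply,
        ← expCoeffC_eq_coeff_subst_exp hg, expCoeffC_zero hg, coeff_mk, totalCycleWeight_zero]
      simp
  simp_rw [prod_pow_cycNum]
  rw [expCoeffC_eq_coeff_subst_exp hg, ← hode, coeff_mk, totalCycleWeight, inv_mul_eq_div]
end
end

section
/- Let δ ∈ ℝ, N ∈ ℕ, and let (v_n)_{n∈ℕ} and (x_n)_{n∈ℕ} be sequences with v_n > 0, v_n → 0 and x_n v_n → ∞. Then ∫_{x_n}^∞ x^δ exp(−x v_n) dx = (x_n^δ e^{−x_n v_n} / v_n) · (∑_{j=0}^N (δ)_j / (x_n v_n)^j + O((x_n v_n)^{−N−1})) as n → ∞, where (δ)_0 = 1 and (δ)_j = δ(δ−1)⋯(δ−j+1) for j ≥ 1. -/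
open Filter Real Asymptotics MeasureTheory
open scoped Topology BigOperators

noncomputable section

/-- The falling factorial `(δ)_j = δ (δ-1) ⋯ (δ-j+1)`, with `(δ)_0 = 1`. -/
def fallFac (δ : ℝ) (j : ℕ) : ℝ := ∏ i ∈ Finset.range j, (δ - i)

/-! Integrating by parts `N + 1` times, each time differentiating the power of `t`, produces the
expansion exactly, with remainder `(δ)_{N+1} v^{-N-1} ∫_x^∞ t^{δ-N-1} e^{-tv} dt`. Once
`x v ≥ 2 (δ - N - 1)`, the function `t ↦ t^{δ-N-1} e^{-tv/2}` is bounded on `[x, ∞)` by its value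
at `x`, so the remainder integral is at most `2 x^{δ-N-1} e^{-xv} / v`, which is the claimed
order. -/

lemma fallFac_succ (δ : ℝ) (j : ℕ) : fallFac δ (j + 1) = fallFac δ j * (δ - j) :=
  Finset.prod_range_succ _ _

section TailIntegral

variable {v x : ℝ}

lemma integrableOn_rpow_mul_exp_neg_mul_Ioi (a : ℝ) (hv : 0 < v) (hx : 0 < x) :
    IntegrableOn (fun t => t ^ a * exp (-t * v)) (Set.Ioi x) := by
  refine integrable_of_isBigO_exp_neg (half_pos hv) (fun t ht => ?_) ?_
  · have ht0 : t ≠ 0 := (hx.trans_le ht).ne'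
    exact ((continuousAt_rpow_const t a (Or.inl ht0)).mul (by fun_prop)).continuousWithinAt
  · have hdecay : (fun t : ℝ => t ^ a * exp (-(v / 2) * t)) =O[atTop] (fun _ => (1 : ℝ)) :=
      (tendsto_rpow_mul_exp_neg_mul_atTop_nhds_zero a _ (half_pos hv)).isBigO_one ℝ
    refine (hdecay.mul (isBigO_refl (fun t => exp (-(v / 2) * t)) atTop)).congr (fun t => ?_)
      (fun t => one_mul _)
    rw [mul_assoc, ← exp_add]
    ring_nf

lemma integral_Ioi_rpow_mul_exp_neg_mul_eq_add (a : ℝ) (hv : 0 < v) (hx : 0 < x) :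
    ∫ t in Set.Ioi x, t ^ a * exp (-t * v)
      = x ^ a * exp (-x * v) / v + a / v * ∫ t in Set.Ioi x, t ^ (a - 1) * exp (-t * v) := by
  have hderiv : ∀ t ∈ Set.Ici x, HasDerivAt (fun t => -(t ^ a * exp (-t * v)) / v)
      (t ^ a * exp (-t * v) - a / v * (t ^ (a - 1) * exp (-t * v))) t := by
    intro t ht
    have hpow := hasDerivAt_rpow_const (p := a) (Or.inl (hx.trans_le ht).ne')
    have hexp : HasDerivAt (fun t => exp (-t * v)) (exp (-t * v) * -v) t := by
      simpa using ((hasDerivAt_id t).neg.mul_const v).exp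
    refine ((hpow.mul hexp).neg.div_const v).congr_deriv ?_
    field_simp
    ring
  have hlim : Tendsto (fun t => -(t ^ a * exp (-t * v)) / v) atTop (𝓝 (-0 / v)) := by
    refine ((tendsto_rpow_mul_exp_neg_mul_atTop_nhds_zero a v hv).congr fun t => ?_).neg.div_const _
    ring_nf
  have hint := integrableOn_rpow_mul_exp_neg_mul_Ioi a hv hx
  have hint' := (integrableOn_rpow_mul_exp_neg_mul_Ioi (a - 1) hv hx).const_mul (a / v)
  have hftc := integral_Ioi_of_hasDerivAt_of_tendsto' hderiv (hint.sub hint') hlim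
  rw [integral_sub hint hint', integral_const_mul] at hftc
  linear_combination hftc

lemma integral_Ioi_rpow_mul_exp_neg_mul_expansion (δ : ℝ) (N : ℕ) (hv : 0 < v) (hx : 0 < x) :
    ∫ t in Set.Ioi x, t ^ δ * exp (-t * v)
      = x ^ δ * exp (-x * v) / v * ∑ j ∈ Finset.range (N + 1), fallFac δ j / (x * v) ^ j
        + fallFac δ (N + 1) / v ^ (N + 1) * ∫ t in Set.Ioi x, t ^ (δ - (N + 1)) * exp (-t * v) := by
  induction N with
  | zero =>
    simpa [fallFac] using integral_Ioi_rpow_mul_exp_neg_mul_eq_add δ hv hx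
  | succ N ih =>
    have hpow : x ^ (δ - (N + 1)) = x ^ δ / x ^ (N + 1) := by
      exact_mod_cast rpow_sub_natCast hx.ne' δ (N + 1)
    rw [ih, integral_Ioi_rpow_mul_exp_neg_mul_eq_add _ hv hx, hpow, Finset.sum_range_succ _ (N + 1),
      fallFac_succ δ (N + 1)]
    push_cast
    rw [show δ - (N + 1) - 1 = δ - (N + 1 + 1) by ring]
    field_simp
    ring

lemma rpow_mul_exp_neg_mul_le {a t : ℝ} (hv : 0 ≤ v) (hx : 0 < x) (hxt : x ≤ t)
    (ha : 2 * a ≤ x * v) :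
    t ^ a * exp (-t * v) ≤ x ^ a * exp (-x * (v / 2)) * exp (-(v / 2) * t) := by
  have ht : 0 < t := hx.trans_le hxt
  have hlog_nonneg : 0 ≤ log t - log x := sub_nonneg.2 (log_le_log hx hxt)
  -- `log (t / x) ≤ t / x - 1`
  have hlog_le : x * (log t - log x) ≤ t - x := by
    have := log_le_sub_one_of_pos (div_pos ht hx)
    rw [log_div ht.ne' hx.ne', le_sub_iff_add_le, le_div_iff₀ hx] at this
    linarith
  rw [rpow_def_of_pos ht, rpow_def_of_pos hx, ← exp_add, ← exp_add, ← exp_add, exp_le_exp]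
  nlinarith [mul_le_mul_of_nonneg_right ha hlog_nonneg,
    mul_le_mul_of_nonneg_left hlog_le (by positivity : 0 ≤ v / 2)]

lemma integral_Ioi_rpow_mul_exp_neg_mul_le {a : ℝ} (hv : 0 < v) (hx : 0 < x)
    (ha : 2 * a ≤ x * v) :
    ∫ t in Set.Ioi x, t ^ a * exp (-t * v) ≤ 2 * x ^ a * exp (-x * v) / v := by
  have hv2 : -(v / 2) < 0 := by linarith
  calc ∫ t in Set.Ioi x, t ^ a * exp (-t * v)
      ≤ ∫ t in Set.Ioi x, x ^ a * exp (-x * (v / 2)) * exp (-(v / 2) * t) :=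
        setIntegral_mono_on (integrableOn_rpow_mul_exp_neg_mul_Ioi a hv hx)
          ((integrableOn_exp_mul_Ioi hv2 x).const_mul _) measurableSet_Ioi
          fun t ht => rpow_mul_exp_neg_mul_le hv.le hx (le_of_lt ht) ha
    _ = x ^ a * (exp (-x * (v / 2)) * exp (-(v / 2) * x)) / (v / 2) := by
        rw [integral_const_mul, integral_exp_mul_Ioi hv2, neg_div_neg_eq]
        ring
    _ = 2 * x ^ a * exp (-x * v) / v := by
        rw [← exp_add]
        field_simp
        ring_nf

lemma norm_integral_sub_expansion_le (δ : ℝ) (N : ℕ) (hv : 0 < v) (hx : 0 < x)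
    (h : 2 * (δ - (N + 1)) ≤ x * v) :
    ‖(∫ t in Set.Ioi x, t ^ δ * exp (-t * v))
        - x ^ δ * exp (-x * v) / v * ∑ j ∈ Finset.range (N + 1), fallFac δ j / (x * v) ^ j‖
      ≤ 2 * |fallFac δ (N + 1)| * ‖x ^ δ * exp (-x * v) / v * ((x * v) ^ (N + 1))⁻¹‖ := by
  have hpow : x ^ (δ - (N + 1)) = x ^ δ / x ^ (N + 1) := by
    exact_mod_cast rpow_sub_natCast hx.ne' δ (N + 1)
  have hrem_nonneg : 0 ≤ ∫ t in Set.Ioi x, t ^ (δ - (N + 1)) * exp (-t * v) :=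
    setIntegral_nonneg measurableSet_Ioi fun t ht =>
      mul_nonneg (rpow_nonneg (hx.trans ht).le _) (exp_nonneg _)
  have hrem_le := integral_Ioi_rpow_mul_exp_neg_mul_le hv hx h
  have hscale : 0 ≤ x ^ δ * exp (-x * v) / v * ((x * v) ^ (N + 1))⁻¹ := by positivity
  rw [integral_Ioi_rpow_mul_exp_neg_mul_expansion δ N hv hx, add_sub_cancel_left,
    Real.norm_of_nonneg hscale, norm_mul, norm_div, norm_pow, Real.norm_of_nonneg hrem_nonneg,
    Real.norm_of_nonneg hv.le, Real.norm_eq_abs]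
  calc |fallFac δ (N + 1)| / v ^ (N + 1) * ∫ t in Set.Ioi x, t ^ (δ - (N + 1)) * exp (-t * v)
      ≤ |fallFac δ (N + 1)| / v ^ (N + 1) * (2 * x ^ (δ - (N + 1)) * exp (-x * v) / v) := by
        gcongr
    _ = 2 * |fallFac δ (N + 1)| * (x ^ δ * exp (-x * v) / v * ((x * v) ^ (N + 1))⁻¹) := by
        rw [hpow, mul_pow]
        field_simp

end TailIntegral

theorem integral_tail_asymptotics_general
    (δ : ℝ) (N : ℕ) (v x : ℕ → ℝ)
    (hvpos : ∀ n, 0 < v n)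
    (hxv : Tendsto (fun n => x n * v n) atTop atTop) :
    (fun n : ℕ =>
        (∫ t in Set.Ioi (x n), t ^ δ * Real.exp (-t * v n))
          - (x n ^ δ * Real.exp (-(x n) * v n) / v n) *
              ∑ j ∈ Finset.range (N + 1), fallFac δ j / (x n * v n) ^ j)
      =O[atTop]
      (fun n : ℕ =>
        (x n ^ δ * Real.exp (-(x n) * v n) / v n) * ((x n * v n) ^ (N + 1))⁻¹) := by
  refine IsBigO.of_bound (2 * |fallFac δ (N + 1)|) ?_
  filter_upwards [hxv.eventually_ge_atTop (max (2 * (δ - (N + 1))) 1)] with n hn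
  have hxn : 0 < x n :=
    (pos_iff_pos_of_mul_pos (one_pos.trans_le ((le_max_right _ _).trans hn))).2 (hvpos n)
  exact norm_integral_sub_expansion_le δ N (hvpos n) hxn ((le_max_left _ _).trans hn)

/-- Equation (2.15): for `v_n → 0`, `x_n v_n → ∞`,
`∫_{x_n}^∞ x^δ e^{-x v_n} dx
  = (x_n^δ e^{-x_n v_n} / v_n) (∑_{j=0}^N (δ)_j / (x_n v_n)^j + O((x_n v_n)^{-N-1}))`. -/
theorem integral_tail_asymptotics
    (δ : ℝ) (N : ℕ) (v x : ℕ → ℝ)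
    (hvpos : ∀ n, 0 < v n) (hvlim : Tendsto v atTop (𝓝 0))
    (hxv : Tendsto (fun n => x n * v n) atTop atTop) :
    (fun n : ℕ =>
        (∫ t in Set.Ioi (x n), t ^ δ * Real.exp (-t * v n))
          - (x n ^ δ * Real.exp (-(x n) * v n) / v n) *
              ∑ j ∈ Finset.range (N + 1), fallFac δ j / (x n * v n) ^ j)
      =O[atTop]
      (fun n : ℕ =>
        (x n ^ δ * Real.exp (-(x n) * v n) / v n) * ((x n * v n) ^ (N + 1))⁻¹) :=
  integral_tail_asymptotics_general δ N v x hvpos hxv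
end
end

section
/- For every n large enough, the equation ∑_{k=1}^∞ θ_k e^{−k v} = n has a unique solution v = v_n > 0, and this solution satisfies v_n ~ (n/Γ(α+1))^{−1/(1+α)} as n → ∞, i.e. v_n (n/Γ(α+1))^{1/(1+α)} → 1. -/
/-!
With `S v = ∑ θ_k e^{-kv}`, the quantity `v^{1+α} S v` is the integral over `t > 0` of the step
function `θ_c / c^α · (c v)^α e^{-c v}`, `c = ⌈t / v⌉`. As `v → 0+` it converges pointwise to
`t^α e^{-t}` (because `c → ∞` and `c v → t`) and is dominated by `C (t + 1)^α e^{-t}`, so by dominated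
convergence `v^{1+α} S v → Γ(α + 1)`. Since `S` is continuous, strictly decreasing and unbounded
near `0`, `S v = n` has exactly one root `v_n` for large `n`, `v_n → 0`, and `v_n^{1+α} n → Γ(α + 1)`.
-/

open Filter Real
open scoped Topology

noncomputable section

open MeasureTheory Set Asymptotics

def laplaceSeries (θ : ℕ → ℝ) (v : ℝ) : ℝ :=
  ∑' k : ℕ, θ (k + 1) * exp (-((k : ℝ) + 1) * v)

theorem exists_forall_norm_le_of_tendsto {E : Type*} [SeminormedAddCommGroup E] {u : ℕ → E}
    {a : E} (hu : Tendsto u atTop (𝓝 a)) : ∃ C, ∀ k, ‖u k‖ ≤ C := by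
  obtain ⟨C, hC⟩ := hu.norm.bddAbove_range
  exact ⟨C, fun k => hC ⟨k, rfl⟩⟩

theorem measurable_comp_natCeil_div {β : Type*} [MeasurableSpace β] (a : ℕ → β) (v : ℝ) :
    Measurable fun t : ℝ => a ⌈t / v⌉₊ :=
  measurable_from_nat.comp (Nat.measurable_ceil.comp (measurable_id.div_const v))

section StepFunction

variable {v : ℝ}

theorem preimage_natCeil_div_singleton_succ (hv : 0 < v) (k : ℕ) :
    (fun t : ℝ => ⌈t / v⌉₊) ⁻¹' {k + 1} = Ioc (k * v) ((k + 1) * v) := by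
  ext t
  simp [Nat.ceil_eq_iff, lt_div_iff₀ hv, div_le_iff₀ hv]

theorem hasSum_integral_Ioi_natCeil_div (a : ℕ → ℝ) (hv : 0 < v)
    (ha : IntegrableOn (fun t => a ⌈t / v⌉₊) (Ioi 0)) :
    HasSum (fun k : ℕ => v * a (k + 1)) (∫ t in Ioi 0, a ⌈t / v⌉₊) := by
  set s : ℕ → Set ℝ := fun k => (fun t : ℝ => ⌈t / v⌉₊) ⁻¹' {k + 1}
  have hunion : ⋃ k, s k = Ioi 0 := by
    ext t
    simp [s, eq_comm (a := ⌈t / v⌉₊), div_pos_iff_of_pos_right hv]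
  have hdisj : Pairwise (Function.onFun Disjoint s) :=
    fun i j hij => (disjoint_singleton.2 (by simpa using hij)).preimage _
  have hmeas (k : ℕ) : MeasurableSet (s k) :=
    measurable_comp_natCeil_div id v (measurableSet_singleton _)
  rw [← hunion] at ha ⊢
  refine (hasSum_integral_iUnion hmeas hdisj ha).congr_fun fun k => ?_
  rw [setIntegral_congr_fun (hmeas k) fun t ht => congrArg a ht, setIntegral_const,
    show s k = _ from preimage_natCeil_div_singleton_succ hv k, volume_real_Ioc_of_le (by gcongr; linarith),
    smul_eq_mul]
  ring

theorem natCeil_div_mul_mem_Icc {t : ℝ} (ht : 0 ≤ t) (hv : 0 < v) :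
    (⌈t / v⌉₊ : ℝ) * v ∈ Icc t (t + v) := by
  constructor
  · rw [← div_le_iff₀ hv]
    exact Nat.le_ceil _
  · rw [← le_div_iff₀ hv, add_div, div_self hv.ne']
    exact (Nat.ceil_lt_add_one (div_nonneg ht hv.le)).le

theorem tendsto_natCeil_div_mul_nhdsGT_zero {t : ℝ} (ht : 0 ≤ t) :
    Tendsto (fun v : ℝ => (⌈t / v⌉₊ : ℝ) * v) (𝓝[>] 0) (𝓝 t) := by
  have hupper : Tendsto (fun v : ℝ => t + v) (𝓝[>] 0) (𝓝 t) :=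
    ((continuous_const.add continuous_id).tendsto' 0 t (add_zero t)).mono_left nhdsWithin_le_nhds
  refine tendsto_of_tendsto_of_tendsto_of_le_of_le' tendsto_const_nhds hupper ?_ ?_ <;>
    filter_upwards [self_mem_nhdsWithin] with v hv
  exacts [(natCeil_div_mul_mem_Icc ht hv).1, (natCeil_div_mul_mem_Icc ht hv).2]

theorem tendsto_natCeil_div_nhdsGT_zero {t : ℝ} (ht : 0 < t) :
    Tendsto (fun v : ℝ => ⌈t / v⌉₊) (𝓝[>] 0) atTop := by
  have hdiv : Tendsto (fun v : ℝ => t / v) (𝓝[>] 0) atTop := by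
    simpa only [div_eq_mul_inv] using tendsto_inv_nhdsGT_zero.const_mul_atTop ht
  exact tendsto_natCast_atTop_iff.1 (tendsto_atTop_mono (fun v => Nat.le_ceil _) hdiv)

end StepFunction

theorem integrableOn_add_rpow_mul_exp_neg (α : ℝ) {s : ℝ} (hs : 0 < s) :
    IntegrableOn (fun t => (t + s) ^ α * exp (-t)) (Ioi 0) := by
  refine integrable_of_isBigO_exp_neg one_half_pos ?_ ?_
  · exact (ContinuousOn.rpow_const (by fun_prop) fun t (ht : 0 ≤ t) => Or.inl (by linarith)).mul
      (by fun_prop)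
  · have hdecay := (tendsto_rpow_mul_exp_neg_mul_atTop_nhds_zero α (1 / 2) one_half_pos).comp
      (tendsto_atTop_add_const_right _ s tendsto_id)
    refine ((hdecay.isBigO_one ℝ).mul (isBigO_refl (fun t => exp (-(1 / 2) * t)) atTop)
      |>.const_mul_left (exp (s / 2))).congr (fun t => ?_) fun t => one_mul _
    simp only [Function.comp_apply, id]
    rw [mul_comm, mul_assoc, mul_assoc, ← exp_add, ← exp_add]
    ring_nf

theorem Gamma_add_one_eq_integral {α : ℝ} (hα : -1 < α) :
    Gamma (α + 1) = ∫ t in Ioi 0, t ^ α * exp (-t) := by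
  rw [Gamma_eq_integral (by linarith)]
  simp only [add_sub_cancel_right, mul_comm]

section LaplaceSeries

variable {α : ℝ} {θ : ℕ → ℝ}

def normalizedTerm (α : ℝ) (θ : ℕ → ℝ) (v : ℝ) (k : ℕ) : ℝ :=
  θ k / (k : ℝ) ^ α * ((k * v) ^ α * exp (-(k * v)))

theorem mul_normalizedTerm_succ {v : ℝ} (hv : 0 < v) (k : ℕ) :
    v * normalizedTerm α θ v (k + 1) = v ^ (1 + α) * (θ (k + 1) * exp (-((k : ℝ) + 1) * v)) := by
  have hk : (0 : ℝ) < (k : ℝ) + 1 := by positivity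
  simp only [normalizedTerm, Nat.cast_add_one]
  rw [mul_rpow hk.le hv.le, rpow_add hv, rpow_one, neg_mul]
  field_simp

theorem norm_normalizedTerm_natCeil_le (hα : 0 ≤ α) {C : ℝ}
    (hC : ∀ k : ℕ, ‖θ k / (k : ℝ) ^ α‖ ≤ C) {t v : ℝ} (ht : 0 ≤ t) (hv : 0 < v) :
    ‖normalizedTerm α θ v ⌈t / v⌉₊‖ ≤ C * ((t + v) ^ α * exp (-t)) := by
  obtain ⟨hlow, hhigh⟩ := natCeil_div_mul_mem_Icc ht hv
  have hC0 : 0 ≤ C := (norm_nonneg _).trans (hC 0)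
  have hf0 : 0 ≤ ((⌈t / v⌉₊ : ℝ) * v) ^ α * exp (-((⌈t / v⌉₊ : ℝ) * v)) :=
    mul_nonneg (rpow_nonneg (ht.trans hlow) _) (exp_pos _).le
  rw [normalizedTerm, norm_mul, Real.norm_of_nonneg hf0]
  gcongr
  exact hC _

theorem tendsto_normalizedTerm_natCeil
    (hθ : Tendsto (fun k : ℕ => θ k / (k : ℝ) ^ α) atTop (𝓝 1)) {t : ℝ} (ht : 0 < t) :
    Tendsto (fun v => normalizedTerm α θ v ⌈t / v⌉₊) (𝓝[>] 0) (𝓝 (t ^ α * exp (-t))) := by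
  have hx := tendsto_natCeil_div_mul_nhdsGT_zero ht.le
  simpa only [normalizedTerm, one_mul, Function.comp_def] using
    (hθ.comp (tendsto_natCeil_div_nhdsGT_zero ht)).mul
      ((hx.rpow_const (Or.inl ht.ne')).mul ((continuous_exp.tendsto _).comp hx.neg))

theorem integrableOn_normalizedTerm_natCeil (hα : 0 ≤ α) {C : ℝ}
    (hC : ∀ k : ℕ, ‖θ k / (k : ℝ) ^ α‖ ≤ C) {v : ℝ} (hv : 0 < v) :
    IntegrableOn (fun t => normalizedTerm α θ v ⌈t / v⌉₊) (Ioi 0) := by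
  refine ((integrableOn_add_rpow_mul_exp_neg α hv).const_mul C).mono'
    (measurable_comp_natCeil_div _ v).aestronglyMeasurable ?_
  exact (ae_restrict_iff' measurableSet_Ioi).2 <| .of_forall fun t ht =>
    norm_normalizedTerm_natCeil_le hα hC (le_of_lt ht) hv

theorem hasSum_rpow_mul_laplaceSeries_term (hα : 0 ≤ α) {C : ℝ}
    (hC : ∀ k : ℕ, ‖θ k / (k : ℝ) ^ α‖ ≤ C) {v : ℝ} (hv : 0 < v) :
    HasSum (fun k : ℕ => v ^ (1 + α) * (θ (k + 1) * exp (-((k : ℝ) + 1) * v)))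
      (∫ t in Ioi 0, normalizedTerm α θ v ⌈t / v⌉₊) := by
  simpa only [mul_normalizedTerm_succ hv] using
    hasSum_integral_Ioi_natCeil_div _ hv (integrableOn_normalizedTerm_natCeil hα hC hv)

theorem summable_laplaceSeries (hα : 0 ≤ α)
    (hθ : Tendsto (fun k : ℕ => θ k / (k : ℝ) ^ α) atTop (𝓝 1)) {v : ℝ} (hv : 0 < v) :
    Summable fun k : ℕ => θ (k + 1) * exp (-((k : ℝ) + 1) * v) := by
  obtain ⟨C, hC⟩ := exists_forall_norm_le_of_tendsto hθ
  exact (summable_mul_left_iff (rpow_pos_of_pos hv _).ne').1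
    (hasSum_rpow_mul_laplaceSeries_term hα hC hv).summable

theorem tendsto_rpow_mul_laplaceSeries (hα : 0 ≤ α)
    (hθ : Tendsto (fun k : ℕ => θ k / (k : ℝ) ^ α) atTop (𝓝 1)) :
    Tendsto (fun v => v ^ (1 + α) * laplaceSeries θ v) (𝓝[>] 0) (𝓝 (Gamma (α + 1))) := by
  obtain ⟨C, hC⟩ := exists_forall_norm_le_of_tendsto hθ
  have hlim : Tendsto (fun v => ∫ t in Ioi 0, normalizedTerm α θ v ⌈t / v⌉₊) (𝓝[>] 0)
      (𝓝 (∫ t in Ioi 0, t ^ α * exp (-t))) := by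
    refine tendsto_integral_filter_of_dominated_convergence (fun t => C * ((t + 1) ^ α * exp (-t)))
      (.of_forall fun v => (measurable_comp_natCeil_div _ v).aestronglyMeasurable) ?_
      ((integrableOn_add_rpow_mul_exp_neg α one_pos).const_mul C)
      ((ae_restrict_iff' measurableSet_Ioi).2 <| .of_forall fun t ht =>
        tendsto_normalizedTerm_natCeil hθ ht)
    filter_upwards [Ioc_mem_nhdsGT one_pos] with v ⟨hv0, hv1⟩
    refine (ae_restrict_iff' measurableSet_Ioi).2 <| .of_forall fun t ht =>
      (norm_normalizedTerm_natCeil_le hα hC (le_of_lt ht) hv0).trans ?_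
    have hC0 : 0 ≤ C := (norm_nonneg _).trans (hC 0)
    have ht0 : (0 : ℝ) ≤ t := le_of_lt ht
    gcongr
  rw [Gamma_add_one_eq_integral (by linarith)]
  refine hlim.congr' ?_
  filter_upwards [self_mem_nhdsWithin] with v hv
  rw [laplaceSeries, ← tsum_mul_left, (hasSum_rpow_mul_laplaceSeries_term hα hC hv).tsum_eq]

theorem tendsto_laplaceSeries_nhdsGT_zero (hα : 0 ≤ α)
    (hθ : Tendsto (fun k : ℕ => θ k / (k : ℝ) ^ α) atTop (𝓝 1)) :
    Tendsto (laplaceSeries θ) (𝓝[>] 0) atTop := by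
  have hpow : Tendsto (fun v : ℝ => v ^ (1 + α)) (𝓝[>] 0) (𝓝[>] 0) := by
    have hcont := (continuousAt_rpow_const 0 (1 + α) (by right; linarith)).tendsto
    rw [zero_rpow (by linarith)] at hcont
    exact tendsto_nhdsWithin_iff.2 ⟨hcont.mono_left nhdsWithin_le_nhds,
      eventually_nhdsWithin_of_forall fun v hv => rpow_pos_of_pos hv _⟩
  refine ((tendsto_rpow_mul_laplaceSeries hα hθ).pos_mul_atTop
    (Gamma_pos_of_pos (by linarith)) hpow.inv_tendsto_nhdsGT_zero).congr' ?_
  filter_upwards [self_mem_nhdsWithin] with v hv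
  have := (rpow_pos_of_pos hv (1 + α)).ne'
  simp only [Pi.inv_apply]
  field_simp

theorem laplaceSeries_strictAntiOn (hθ0 : ∀ k, 0 ≤ θ k) {j : ℕ} (hj : 0 < θ (j + 1))
    (hsum : ∀ v, 0 < v → Summable fun k : ℕ => θ (k + 1) * exp (-((k : ℝ) + 1) * v)) :
    StrictAntiOn (laplaceSeries θ) (Ioi 0) := by
  intro a ha b hb hab
  refine (hsum b hb).tsum_lt_tsum (i := j) (fun k => ?_) ?_ (hsum a ha) <;> simp only [neg_mul]
  · gcongr
    exact hθ0 _
  · gcongr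

theorem continuousOn_laplaceSeries_Ici (hθ0 : ∀ k, 0 ≤ θ k) {a : ℝ}
    (hsum : Summable fun k : ℕ => θ (k + 1) * exp (-((k : ℝ) + 1) * a)) :
    ContinuousOn (laplaceSeries θ) (Ici a) := by
  refine continuousOn_tsum (fun k => by fun_prop) hsum fun k v (hv : a ≤ v) => ?_
  rw [Real.norm_of_nonneg (mul_nonneg (hθ0 _) (exp_pos _).le), neg_mul, neg_mul]
  gcongr
  exact hθ0 _

theorem continuousOn_laplaceSeries (hθ0 : ∀ k, 0 ≤ θ k)
    (hsum : ∀ v, 0 < v → Summable fun k : ℕ => θ (k + 1) * exp (-((k : ℝ) + 1) * v)) :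
    ContinuousOn (laplaceSeries θ) (Ioi 0) := fun x (hx : 0 < x) =>
  ((continuousOn_laplaceSeries_Ici hθ0 (hsum (x / 2) (half_pos hx))).continuousAt
    (Ici_mem_nhds (half_lt_self hx))).continuousWithinAt

end LaplaceSeries

theorem existsUnique_eq_of_strictAntiOn_Ioi {f : ℝ → ℝ} (hf : StrictAntiOn f (Ioi 0))
    (hc : ContinuousOn f (Ioi 0)) (htop : Tendsto f (𝓝[>] 0) atTop) {b y : ℝ} (hb : 0 < b)
    (hy : f b < y) : ∃! w, 0 < w ∧ f w = y := by
  obtain ⟨a, ha, ha0, hab⟩ : ∃ a, y < f a ∧ a ∈ Ioo 0 b :=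
    ((htop.eventually_gt_atTop y).and (Ioo_mem_nhdsGT hb)).exists
  obtain ⟨w, ⟨haw, -⟩, hw⟩ := intermediate_value_Icc' hab.le
    (hc.mono fun x hx => ha0.trans_le hx.1) ⟨hy.le, ha.le⟩
  exact ⟨w, ⟨ha0.trans_le haw, hw⟩, fun w' hw' =>
    hf.injOn hw'.1 (ha0.trans_le haw) (hw'.2.trans hw.symm)⟩

theorem tendsto_nhdsGT_zero_of_antitoneOn {ι : Type*} {l : Filter ι} {f : ℝ → ℝ}
    (hf : AntitoneOn f (Ioi 0)) {u : ι → ℝ} (hu : ∀ᶠ i in l, 0 < u i)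
    (hfu : Tendsto (fun i => f (u i)) l atTop) : Tendsto u l (𝓝[>] 0) := by
  refine tendsto_nhdsWithin_iff.2
    ⟨tendsto_order.2 ⟨fun c hc => hu.mono fun i hi => hc.trans hi, fun c hc => ?_⟩, hu⟩
  filter_upwards [hu, hfu.eventually_gt_atTop (f c)] with i hi hfi
  by_contra! hci
  exact (hf hc hi hci).not_gt hfi

theorem tendsto_mul_rpow_one_div_of_tendsto_rpow_mul {ι : Type*} {l : Filter ι} {u x : ι → ℝ}
    {p : ℝ} (hp : p ≠ 0) (hu : ∀ᶠ i in l, 0 ≤ u i) (hx : ∀ᶠ i in l, 0 ≤ x i)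
    (h : Tendsto (fun i => u i ^ p * x i) l (𝓝 1)) :
    Tendsto (fun i => u i * x i ^ (1 / p)) l (𝓝 1) := by
  have hroot := h.rpow_const (p := 1 / p) (Or.inl one_ne_zero)
  rw [one_rpow] at hroot
  refine hroot.congr' ?_
  filter_upwards [hu, hx] with i hui hxi
  rw [mul_rpow (rpow_nonneg hui _) hxi, ← rpow_mul hui, mul_one_div_cancel hp, rpow_one]

/-- For `θ_k ~ k^α` with `α > 0`: for every `n` large enough the equation
`∑_{k=1}^∞ θ_k e^{-k v} = n` has a unique solution `v = v_n > 0`, and any such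
solution satisfies `v_n ~ (n / Γ(α+1))^{-1/(1+α)}` as `n → ∞`. -/
theorem saddle_point_equation_solution
    (α : ℝ) (hα : 0 < α)
    (θ : ℕ → ℝ) (hθ0 : ∀ k, 0 ≤ θ k)
    (hθ : Tendsto (fun k : ℕ => θ k / (k : ℝ) ^ α) atTop (𝓝 1)) :
    (∀ᶠ n : ℕ in atTop, ∃! w : ℝ, 0 < w ∧
        (∑' k : ℕ, θ (k + 1) * Real.exp (-((k : ℝ) + 1) * w)) = n) ∧
      ∀ v : ℕ → ℝ,
        (∀ᶠ n : ℕ in atTop, 0 < v n ∧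
          (∑' k : ℕ, θ (k + 1) * Real.exp (-((k : ℝ) + 1) * v n)) = n) →
        Tendsto (fun n : ℕ => v n * ((n : ℝ) / Real.Gamma (α + 1)) ^ ((1 : ℝ) / (1 + α)))
          atTop (𝓝 1) := by
  have hsum (v : ℝ) (hv : 0 < v) := summable_laplaceSeries hα.le hθ hv
  obtain ⟨j, hj⟩ : ∃ j, 0 < θ (j + 1) := by
    have hpos : ∀ᶠ k : ℕ in atTop, 0 < θ k / (k : ℝ) ^ α := hθ.eventually_const_lt one_pos
    obtain ⟨j, hj⟩ := ((tendsto_add_atTop_nat 1).eventually hpos).exists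
    exact ⟨j, (div_pos_iff_of_pos_right (by positivity)).1 hj⟩
  have hanti := laplaceSeries_strictAntiOn hθ0 hj hsum
  refine ⟨?_, fun v hv => ?_⟩
  · filter_upwards [tendsto_natCast_atTop_atTop.eventually_gt_atTop (laplaceSeries θ 1)] with n hn
    exact existsUnique_eq_of_strictAntiOn_Ioi hanti (continuousOn_laplaceSeries hθ0 hsum)
      (tendsto_laplaceSeries_nhdsGT_zero hα.le hθ) one_pos hn
  · have hv0 : Tendsto v atTop (𝓝[>] 0) :=
      tendsto_nhdsGT_zero_of_antitoneOn hanti.antitoneOn (hv.mono fun n hn => hn.1)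
        (tendsto_natCast_atTop_atTop.congr' (hv.mono fun n hn => hn.2.symm))
    have hlim := ((tendsto_rpow_mul_laplaceSeries hα.le hθ).comp hv0).div_const (Gamma (α + 1))
    rw [div_self (Gamma_pos_of_pos (by linarith)).ne'] at hlim
    refine tendsto_mul_rpow_one_div_of_tendsto_rpow_mul (by linarith) (hv.mono fun n hn => hn.1.le)
      (.of_forall fun n => by positivity) (hlim.congr' (hv.mono fun n hn => ?_))
    simp only [Function.comp_apply, laplaceSeries]
    rw [hn.2, mul_div_assoc]
end
end

section
/- Fix y > 0 and set x_n = n*(ℓ_n − log y). Then ∑_{k ≥ x_n} (θ_k/k) e^{−k v_n} → y as n → ∞; in particular, in the special case θ_k = k^α, ∑_{k ≥ x_n} k^{α−1} e^{−k v_n} → y. -/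
/-!
Write `β = α - 1`, so that `θ_k / k ~ k^β`. For `k ≥ m`, `|β log (k/m)| ≤ |β| (k/m - 1)` squeezes
`k^β e^{-k v}` between `m^β e^{-m v} e^{-(k-m)(v ± |β|/m)}`; hence, once `m v → ∞` and `v → 0`,
the tail `∑_{k ≥ m} (θ_k/k) e^{-k v}` is asymptotic to the geometric value `m^β e^{-m v} / v`.
For `m = ⌈x_n⌉` this is asymptotic to `x_n^β e^{-x_n v_n} / v_n`, which with `t = n*`,
`L = α log t` and `z = L + β log L - log y` (so `x_n = t z`) equals `(z/L)^β y` exactly, and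
`z/L → 1`. The normalisation `∑ θ_k e^{-k v_n} = n` forces `v_n → 0` because the series is
finite for every fixed positive `v`.
-/

open Filter Real
open scoped Topology

noncomputable section

/-- `n* = 1/v_n`. -/
def nstar (v : ℕ → ℝ) (n : ℕ) : ℝ := (v n)⁻¹

/-- `ℓ_n = α log (n*) + (α-1) log (α log (n*))`. -/
def elln (α : ℝ) (v : ℕ → ℝ) (n : ℕ) : ℝ :=
  α * Real.log (nstar v n) + (α - 1) * Real.log (α * Real.log (nstar v n))

open Asymptotics

variable {ι : Type*} {l : Filter ι}

lemma summable_abs_mul_exp_neg_of_isBigO {θ : ℕ → ℝ} {α b : ℝ}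
    (hθ : θ =O[atTop] fun k : ℕ => (k : ℝ) ^ α) (hb : 0 < b) :
    Summable fun k : ℕ => |θ k| * exp (-k * b) := by
  have hpow : (fun k : ℕ => (k : ℝ) ^ α) =O[atTop] fun k : ℕ => exp (b / 2 * k) :=
    (isLittleO_rpow_exp_pos_mul_atTop α (half_pos hb)).isBigO.comp_tendsto
      tendsto_natCast_atTop_atTop
  have hbound : (fun k : ℕ => |θ k| * exp (-k * b)) =O[atTop] fun k : ℕ => exp (k * -(b / 2)) := by
    refine ((hθ.trans hpow).abs_left.mul (isBigO_refl (fun k : ℕ => exp (-k * b)) _)).congr_right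
      fun k => ?_
    rw [← exp_add]
    ring_nf
  exact summable_of_isBigO_nat (summable_exp_nat_mul_iff.2 (by linarith)) hbound

lemma tendsto_nhds_zero_of_tsum_mul_exp_neg_eq {θ v : ℕ → ℝ}
    (hθ : ∀ b > 0, Summable fun k : ℕ => |θ k| * exp (-k * b))
    (hv : ∀ n : ℕ, 1 ≤ n → 0 < v n ∧ (∑' k : ℕ, θ (k + 1) * exp (-((k : ℝ) + 1) * v n)) = n) :
    Tendsto v atTop (𝓝 0) := by
  refine tendsto_order.2 ⟨fun a ha => ?_, fun b hb => ?_⟩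
  · filter_upwards [eventually_ge_atTop 1] with n hn using ha.trans (hv n hn).1
  · have hsum : Summable fun k : ℕ => |θ (k + 1)| * exp (-((k : ℝ) + 1) * b) := by
      simpa using (summable_nat_add_iff 1).2 (hθ b hb)
    filter_upwards [eventually_ge_atTop 1, tendsto_natCast_atTop_atTop.eventually_gt_atTop
      (∑' k, |θ (k + 1)| * exp (-((k : ℝ) + 1) * b))] with n hn hnC
    by_contra! hbv
    refine hnC.not_ge ?_
    calc (n : ℝ) = ‖∑' k : ℕ, θ (k + 1) * exp (-((k : ℝ) + 1) * v n)‖ := by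
          rw [(hv n hn).2, Real.norm_natCast]
      _ ≤ _ := tsum_of_norm_bounded hsum.hasSum fun k => by
          rw [norm_mul, norm_of_nonneg (exp_pos _).le, Real.norm_eq_abs]
          have : 0 ≤ (k : ℝ) := k.cast_nonneg
          exact mul_le_mul_of_nonneg_left (exp_le_exp.2 (by nlinarith)) (abs_nonneg _)

lemma abs_mul_log_le (β : ℝ) {t : ℝ} (ht : 1 ≤ t) : |β * log t| ≤ |β| * (t - 1) := by
  rw [abs_mul, abs_of_nonneg (log_nonneg ht)]
  exact mul_le_mul_of_nonneg_left (log_le_sub_one_of_pos (by linarith)) (abs_nonneg β)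

lemma rpow_mul_exp_neg_bounds (β v : ℝ) {m k : ℕ} (hm : 0 < m) (hmk : m ≤ k) :
    (m : ℝ) ^ β * exp (-m * v) * exp (-(v + |β| / m)) ^ (k - m) ≤ (k : ℝ) ^ β * exp (-k * v) ∧
      (k : ℝ) ^ β * exp (-k * v) ≤ (m : ℝ) ^ β * exp (-m * v) * exp (-(v - |β| / m)) ^ (k - m) := by
  have hm0 : (0 : ℝ) < m := by exact_mod_cast hm
  have hk0 : (0 : ℝ) < k := by exact_mod_cast hm.trans_le hmk
  have hlog := abs_le.1 (abs_mul_log_le β (t := k / m)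
    ((one_le_div hm0).2 (by exact_mod_cast hmk)))
  have hslack : |β| * ((k : ℝ) / m - 1) = ((k - m : ℕ) : ℝ) * (|β| / m) := by
    rw [Nat.cast_sub hmk]; field_simp
  rw [log_div hk0.ne' hm0.ne', hslack] at hlog
  simp only [rpow_def_of_pos hm0, rpow_def_of_pos hk0, ← exp_nat_mul, ← exp_add, exp_le_exp,
    Nat.cast_sub hmk] at hlog ⊢
  constructor <;> nlinarith

lemma tsum_ite_le_eq_tsum_add {M : Type*} [AddCommMonoid M] [TopologicalSpace M]
    (f : ℕ → M) (m : ℕ) : ∑' k, (if m ≤ k then f k else 0) = ∑' j, f (j + m) := by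
  rw [← (add_left_injective m).tsum_eq]
  · simp
  · intro k hk
    exact ⟨k - m, Nat.sub_add_cancel (not_not.1 fun h => hk (if_neg h))⟩

lemma tsum_bounds_of_geometric_bounds {f : ℕ → ℝ} {a b r s : ℝ} (ha : 0 ≤ a)
    (hr₀ : 0 ≤ r) (hr₁ : r < 1) (hs₀ : 0 ≤ s) (hs₁ : s < 1)
    (hf : ∀ j, a * r ^ j ≤ f j ∧ f j ≤ b * s ^ j) :
    a / (1 - r) ≤ ∑' j, f j ∧ ∑' j, f j ≤ b / (1 - s) := by
  have hr := (hasSum_geometric_of_lt_one hr₀ hr₁).mul_left a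
  have hs := (hasSum_geometric_of_lt_one hs₀ hs₁).mul_left b
  have hsum : Summable f := hs.summable.of_nonneg_of_le
    (fun j => (mul_nonneg ha (pow_nonneg hr₀ j)).trans (hf j).1) fun j => (hf j).2
  exact ⟨hasSum_le (fun j => (hf j).1) hr hsum.hasSum, hasSum_le (fun j => (hf j).2) hsum.hasSum hs⟩

lemma tendsto_one_sub_exp_neg_div : Tendsto (fun w => (1 - exp (-w)) / w) (𝓝[≠] 0) (𝓝 1) := by
  have hderiv : HasDerivAt (fun w => 1 - exp (-w)) 1 0 := by
    simpa using ((hasDerivAt_neg 0).exp).const_sub 1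
  refine (hasDerivAt_iff_tendsto_slope.1 hderiv).congr fun w => ?_
  simp [slope_def_field]

lemma tendsto_div_one_sub_exp_neg {v w : ι → ℝ}
    (hw : Tendsto w l (𝓝[≠] 0)) (hwv : Tendsto (fun i => w i / v i) l (𝓝 1)) :
    Tendsto (fun i => v i / (1 - exp (-w i))) l (𝓝 1) := by
  have := (hwv.inv₀ one_ne_zero).mul ((tendsto_one_sub_exp_neg_div.comp hw).inv₀ one_ne_zero)
  rw [inv_one, one_mul] at this
  refine this.congr' ?_
  filter_upwards [hw self_mem_nhdsWithin] with i hi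
  simp only [Function.comp_apply, inv_div]
  exact div_mul_div_cancel₀ hi

lemma tendsto_of_eventually_mul_bounds {f g h : ι → ℝ} {y : ℝ}
    (hg : Tendsto g l (𝓝 y)) (hh : Tendsto h l (𝓝 y))
    (hf : ∀ᶠ δ in 𝓝[>] (0 : ℝ), ∀ᶠ i in l, (1 - δ) * g i ≤ f i ∧ f i ≤ (1 + δ) * h i) :
    Tendsto f l (𝓝 y) := by
  have hlower : Tendsto (fun δ : ℝ => (1 - δ) * y) (𝓝[>] 0) (𝓝 y) :=
    ((by fun_prop : Continuous fun δ : ℝ => (1 - δ) * y).tendsto' 0 y (by simp)).mono_left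
      nhdsWithin_le_nhds
  have hupper : Tendsto (fun δ : ℝ => (1 + δ) * y) (𝓝[>] 0) (𝓝 y) :=
    ((by fun_prop : Continuous fun δ : ℝ => (1 + δ) * y).tendsto' 0 y (by simp)).mono_left
      nhdsWithin_le_nhds
  refine tendsto_order.2 ⟨fun a ha => ?_, fun b hb => ?_⟩
  · obtain ⟨δ, hδ, hδa⟩ := (hf.and (hlower.eventually (lt_mem_nhds ha))).exists
    filter_upwards [hδ, (hg.const_mul (1 - δ)).eventually (lt_mem_nhds hδa)]
      with i hi hai using hai.trans_le hi.1
  · obtain ⟨δ, hδ, hδb⟩ := (hf.and (hupper.eventually (gt_mem_nhds hb))).exists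
    filter_upwards [hδ, (hh.const_mul (1 + δ)).eventually (gt_mem_nhds hδb)]
      with i hi hib using hi.2.trans_lt hib

lemma rpow_mul_exp_neg_natCeil_isEquivalent {x v : ι → ℝ} (β : ℝ)
    (hx : Tendsto x l atTop) (hv : Tendsto v l (𝓝 0)) :
    (fun i => (⌈x i⌉₊ : ℝ) ^ β * exp (-⌈x i⌉₊ * v i)) ~[l] fun i => x i ^ β * exp (-x i * v i) := by
  refine isEquivalent_of_tendsto_one ?_
  have hratio : Tendsto (fun i => ((⌈x i⌉₊ : ℝ) / x i) ^ β) l (𝓝 1) := by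
    simpa using (tendsto_nat_ceil_div_atTop.comp hx).rpow_const (p := β) (Or.inl one_ne_zero)
  have hgap : Tendsto (fun i => -(((⌈x i⌉₊ : ℝ) - x i) * v i)) l (𝓝 0) := by
    refine squeeze_zero_norm' ?_ (by simpa using hv.norm)
    filter_upwards [hx.eventually_ge_atTop 0] with i hi
    rw [norm_neg, norm_mul]
    refine mul_le_of_le_one_left (norm_nonneg _) ?_
    rw [Real.norm_of_nonneg (sub_nonneg.2 (Nat.le_ceil _))]
    linarith [Nat.ceil_lt_add_one hi]
  have := hratio.mul ((continuous_exp.tendsto 0).comp hgap)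
  rw [exp_zero, one_mul] at this
  refine this.congr' ?_
  filter_upwards [hx.eventually_gt_atTop 0] with i hi
  simp only [Function.comp_apply, Pi.div_apply]
  rw [div_rpow (Nat.cast_nonneg _) hi.le, mul_div_mul_comm, ← exp_sub]
  ring_nf

lemma mul_exp_neg_bounds {g : ℕ → ℝ} {β δ v : ℝ} {K m : ℕ}
    (hg : ∀ k ≥ K, (1 - δ) * (k : ℝ) ^ β ≤ g k ∧ g k ≤ (1 + δ) * (k : ℝ) ^ β)
    (hδ₀ : 0 ≤ δ) (hδ₁ : δ ≤ 1)
    (hm : 0 < m) (hKm : K ≤ m) (j : ℕ) :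
    (1 - δ) * ((m : ℝ) ^ β * exp (-m * v)) * exp (-(v + |β| / m)) ^ j
        ≤ g (j + m) * exp (-((j + m : ℕ) : ℝ) * v) ∧
      g (j + m) * exp (-((j + m : ℕ) : ℝ) * v)
        ≤ (1 + δ) * ((m : ℝ) ^ β * exp (-m * v)) * exp (-(v - |β| / m)) ^ j := by
  obtain ⟨hlo, hhi⟩ := rpow_mul_exp_neg_bounds β v hm (Nat.le_add_left m j)
  obtain ⟨hg₁, hg₂⟩ := hg (j + m) (by omega)
  rw [Nat.add_sub_cancel] at hlo hhi
  have he := (exp_pos (-((j + m : ℕ) : ℝ) * v)).le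
  constructor
  · nlinarith [mul_le_mul_of_nonneg_left hlo (by linarith : (0 : ℝ) ≤ 1 - δ),
      mul_le_mul_of_nonneg_right hg₁ he]
  · nlinarith [mul_le_mul_of_nonneg_left hhi (by linarith : (0 : ℝ) ≤ 1 + δ),
      mul_le_mul_of_nonneg_right hg₂ he]

lemma tail_tsum_div_bounds {g : ℕ → ℝ} {β δ v : ℝ} {K m : ℕ}
    (hg : ∀ k ≥ K, (1 - δ) * (k : ℝ) ^ β ≤ g k ∧ g k ≤ (1 + δ) * (k : ℝ) ^ β)
    (hδ₀ : 0 ≤ δ) (hδ₁ : δ ≤ 1) (hm : 0 < m) (hKm : K ≤ m) (hv : 0 < v)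
    (hw : 0 < v - |β| / m) :
    (1 - δ) * (v / (1 - exp (-(v + |β| / m))))
        ≤ (∑' k : ℕ, if m ≤ k then g k * exp (-k * v) else 0) / ((m : ℝ) ^ β * exp (-m * v) / v) ∧
      (∑' k : ℕ, if m ≤ k then g k * exp (-k * v) else 0) / ((m : ℝ) ^ β * exp (-m * v) / v)
        ≤ (1 + δ) * (v / (1 - exp (-(v - |β| / m)))) := by
  have hA : 0 < (m : ℝ) ^ β * exp (-m * v) :=
    mul_pos (rpow_pos_of_pos (Nat.cast_pos.2 hm) β) (exp_pos _)
  have hM : 0 < (m : ℝ) ^ β * exp (-m * v) / v := div_pos hA hv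
  obtain ⟨hlo, hhi⟩ := tsum_bounds_of_geometric_bounds (mul_nonneg (by linarith) hA.le)
    (exp_pos _).le (exp_lt_one_iff.2 (neg_lt_zero.2 (add_pos_of_pos_of_nonneg hv (by positivity))))
    (exp_pos _).le (exp_lt_one_iff.2 (neg_lt_zero.2 hw))
    (mul_exp_neg_bounds hg hδ₀ hδ₁ hm hKm)
  rw [tsum_ite_le_eq_tsum_add, le_div_iff₀ hM, div_le_iff₀ hM]
  exact ⟨Eq.trans_le (by field_simp) hlo, hhi.trans_eq (by field_simp)⟩

theorem tail_tsum_isEquivalent {β : ℝ} {g : ℕ → ℝ}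
    (hg : Tendsto (fun k : ℕ => g k / (k : ℝ) ^ β) atTop (𝓝 1)) {m : ι → ℕ} {v : ι → ℝ}
    (hv : Tendsto v l (𝓝 0)) (hmv : Tendsto (fun i => (m i : ℝ) * v i) l atTop) :
    (fun i => ∑' k : ℕ, if m i ≤ k then g k * exp (-k * v i) else 0) ~[l]
      fun i => (m i : ℝ) ^ β * exp (-(m i) * v i) / v i := by
  have hvpos : ∀ᶠ i in l, 0 < v i := (hmv.eventually_gt_atTop 0).mono fun i hi =>
    pos_of_mul_pos_right hi (Nat.cast_nonneg _)
  have hm : Tendsto (fun i => (m i : ℝ)) l atTop := by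
    refine tendsto_atTop_mono' l ?_ hmv
    filter_upwards [hv.eventually_le_const one_pos] with i hi
    exact mul_le_of_le_one_right (Nat.cast_nonneg _) hi
  have hwv (s : ℝ) : Tendsto (fun i => (v i + s / m i) / v i) l (𝓝 1) := by
    rw [← add_zero 1]
    refine (((tendsto_const_nhds (x := s)).div_atTop hmv).const_add 1).congr' ?_
    filter_upwards [hvpos] with i hi
    field_simp
  have hwpos (s : ℝ) : ∀ᶠ i in l, 0 < v i + s / m i := by
    filter_upwards [hvpos, (hwv s).eventually (lt_mem_nhds one_pos)] with i hi hwi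
    exact (div_pos_iff_of_pos_right hi).1 (by simpa using hwi)
  have hq (s : ℝ) : Tendsto (fun i => v i / (1 - exp (-(v i + s / m i)))) l (𝓝 1) := by
    refine tendsto_div_one_sub_exp_neg (tendsto_nhdsWithin_iff.2 ⟨?_, ?_⟩) (hwv s)
    · simpa using hv.add ((tendsto_const_nhds (x := s)).div_atTop hm)
    · filter_upwards [hwpos s] with i hi using hi.ne'
  refine isEquivalent_of_tendsto_one (tendsto_of_eventually_mul_bounds (hq |β|) (hq (-|β|)) ?_)
  filter_upwards [Ioo_mem_nhdsGT one_pos] with δ ⟨hδ₀, hδ₁⟩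
  have hgK : ∀ᶠ k : ℕ in atTop, (1 - δ) * (k : ℝ) ^ β ≤ g k ∧ g k ≤ (1 + δ) * (k : ℝ) ^ β := by
    filter_upwards [hg.eventually (Ioo_mem_nhds (by linarith : 1 - δ < 1)
      (by linarith : 1 < 1 + δ)), eventually_gt_atTop 0] with k ⟨h₁, h₂⟩ hk
    have hpow : 0 < (k : ℝ) ^ β := rpow_pos_of_pos (Nat.cast_pos.2 hk) β
    exact ⟨(le_div_iff₀ hpow).1 h₁.le, (div_le_iff₀ hpow).1 h₂.le⟩
  obtain ⟨K, hK⟩ := eventually_atTop.1 hgK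
  filter_upwards [hvpos, (tendsto_natCast_atTop_iff.1 hm).eventually_ge_atTop (max K 1),
    hwpos (-|β|)] with i hvi hmi hwi
  simp only [neg_div, ← sub_eq_add_neg] at hwi ⊢
  exact tail_tsum_div_bounds hK hδ₀.le hδ₁.le (by omega) (le_of_max_le_left hmi) hvi hwi

/-- `ℓ_n` as a function of `t = n*`, so that `elln α v n = ell α (nstar v n)` definitionally. -/
def ell (α t : ℝ) : ℝ := α * log t + (α - 1) * log (α * log t)

lemma tendsto_ell_sub_div_log {α : ℝ} (hα : 0 < α) (c : ℝ) :
    Tendsto (fun t => (ell α t - c) / (α * log t)) atTop (𝓝 1) := by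
  have hL : Tendsto (fun t => α * log t) atTop atTop := tendsto_log_atTop.const_mul_atTop hα
  have hlog := (isLittleO_log_id_atTop.tendsto_div_nhds_zero.comp hL).const_mul (α - 1)
  have := (hlog.const_add 1).sub ((tendsto_const_nhds (x := c)).div_atTop hL)
  rw [mul_zero, add_zero, sub_zero] at this
  refine this.congr' ?_
  filter_upwards [hL.eventually_gt_atTop 0] with t ht
  have : log t ≠ 0 := right_ne_zero_of_mul ht.ne'
  simp only [Function.comp_apply, id, ell]
  field_simp

lemma tendsto_ell_sub_atTop {α : ℝ} (hα : 0 < α) (c : ℝ) :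
    Tendsto (fun t => ell α t - c) atTop atTop := by
  have hL : Tendsto (fun t => α * log t) atTop atTop := tendsto_log_atTop.const_mul_atTop hα
  refine (hL.atTop_mul_pos one_pos (tendsto_ell_sub_div_log hα c)).congr' ?_
  filter_upwards [hL.eventually_gt_atTop 0] with t ht
  exact mul_div_cancel₀ _ ht.ne'

lemma rpow_mul_exp_neg_div_eq {α t y : ℝ} (ht : 0 < t) (hy : 0 < y) (hL : 0 < α * log t)
    (hz : 0 < ell α t - log y) :
    (t * (ell α t - log y)) ^ (α - 1) * exp (-(t * (ell α t - log y)) * t⁻¹) / t⁻¹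
      = ((ell α t - log y) / (α * log t)) ^ (α - 1) * y := by
  have key : t ^ (α - 1) * t * (α * log t) ^ (α - 1) * exp (-(ell α t - log y)) = y := by
    rw [← rpow_add_one ht.ne', sub_add_cancel, rpow_def_of_pos ht, rpow_def_of_pos hL,
      ← exp_add, ← exp_add]
    convert exp_log hy using 2
    rw [ell]
    ring
  rw [mul_rpow ht.le hz.le, div_rpow hz.le hL.le, neg_mul, mul_comm t, mul_inv_cancel_right₀ ht.ne',
    div_inv_eq_mul]
  have : 0 < (α * log t) ^ (α - 1) := rpow_pos_of_pos hL _
  calc _ = (ell α t - log y) ^ (α - 1) / (α * log t) ^ (α - 1)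
        * (t ^ (α - 1) * t * (α * log t) ^ (α - 1) * exp (-(ell α t - log y))) := by
        field_simp
    _ = _ := by rw [key]

lemma tendsto_rpow_mul_exp_neg_ell {α y : ℝ} (hα : 0 < α) (hy : 0 < y) :
    Tendsto (fun t => (t * (ell α t - log y)) ^ (α - 1) * exp (-(t * (ell α t - log y)) * t⁻¹)
      / t⁻¹) atTop (𝓝 y) := by
  have := ((tendsto_ell_sub_div_log hα (log y)).rpow_const (p := α - 1)
    (Or.inl one_ne_zero)).mul_const y
  rw [one_rpow, one_mul] at this
  refine this.congr' ?_
  filter_upwards [eventually_gt_atTop 0,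
    (tendsto_log_atTop.const_mul_atTop hα).eventually_gt_atTop 0,
    (tendsto_ell_sub_atTop hα (log y)).eventually_gt_atTop 0] with t ht hL hz
  exact (rpow_mul_exp_neg_div_eq ht hy hL hz).symm

theorem tail_sum_tendsto_general
    (α : ℝ) (hα : 0 < α)
    (θ : ℕ → ℝ)
    (hθ : Tendsto (fun k : ℕ => θ k / (k : ℝ) ^ α) atTop (𝓝 1))
    (v : ℕ → ℝ)
    (hv : ∀ n : ℕ, 1 ≤ n → 0 < v n ∧
      (∑' k : ℕ, θ (k + 1) * Real.exp (-((k : ℝ) + 1) * v n)) = n)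
    (y : ℝ) (hy : 0 < y) :
    Tendsto
      (fun n : ℕ => ∑' k : ℕ,
        if nstar v n * (elln α v n - Real.log y) ≤ (k : ℝ)
          then θ k / (k : ℝ) * Real.exp (-(k : ℝ) * v n) else 0)
      atTop (𝓝 y) := by
  have hv0 : Tendsto v atTop (𝓝 0) := tendsto_nhds_zero_of_tsum_mul_exp_neg_eq
    (fun _ hb => summable_abs_mul_exp_neg_of_isBigO (isEquivalent_of_tendsto_one hθ).isBigO hb) hv
  have ht : Tendsto (nstar v) atTop atTop := tendsto_inv_nhdsGT_zero.comp
    (tendsto_nhdsWithin_iff.2 ⟨hv0, (eventually_ge_atTop 1).mono fun n hn => (hv n hn).1⟩)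
  set x := fun n => nstar v n * (elln α v n - log y)
  have hx : Tendsto x atTop atTop := ht.atTop_mul_atTop₀ ((tendsto_ell_sub_atTop hα _).comp ht)
  have hmv : Tendsto (fun n => (⌈x n⌉₊ : ℝ) * v n) atTop atTop := by
    refine tendsto_atTop_mono' _ ?_ ((tendsto_ell_sub_atTop hα (log y)).comp ht)
    filter_upwards [eventually_ge_atTop 1] with n hn
    have hvn := (hv n hn).1
    calc ell α (nstar v n) - log y = x n * v n := by
          simp only [x, nstar, elln]; field_simp; rfl
      _ ≤ ⌈x n⌉₊ * v n := mul_le_mul_of_nonneg_right (Nat.le_ceil _) hvn.le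
  have hg : Tendsto (fun k : ℕ => θ k / k / (k : ℝ) ^ (α - 1)) atTop (𝓝 1) := by
    refine hθ.congr' ?_
    filter_upwards [eventually_gt_atTop 0] with k hk
    have hk₀ : (k : ℝ) ≠ 0 := Nat.cast_ne_zero.2 hk.ne'
    rw [rpow_sub_one hk₀]
    field_simp
  have hM : Tendsto (fun n => x n ^ (α - 1) * exp (-x n * v n) / v n) atTop (𝓝 y) :=
    ((tendsto_rpow_mul_exp_neg_ell hα hy).comp ht).congr fun n => by
      simp only [Function.comp_apply, nstar, inv_inv]; rfl
  have hceil :=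
    (rpow_mul_exp_neg_natCeil_isEquivalent (α - 1) hx hv0).div (IsEquivalent.refl (u := v))
  simpa [Nat.ceil_le] using ((tail_tsum_isEquivalent hg hv0 hmv).trans hceil).symm.tendsto_nhds hM

/-- For fixed `y > 0` and `x_n = n*(ℓ_n - log y)`, one has
`∑_{k ≥ x_n} (θ_k/k) e^{-k v_n} → y` as `n → ∞`. -/
theorem tail_sum_tendsto
    (α : ℝ) (hα : 0 < α)
    (θ : ℕ → ℝ) (hθ0 : ∀ k, 0 ≤ θ k)
    (hθ : Tendsto (fun k : ℕ => θ k / (k : ℝ) ^ α) atTop (𝓝 1))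
    (v : ℕ → ℝ)
    (hv : ∀ n : ℕ, 1 ≤ n → 0 < v n ∧
      (∑' k : ℕ, θ (k + 1) * Real.exp (-((k : ℝ) + 1) * v n)) = n)
    (y : ℝ) (hy : 0 < y) :
    Tendsto
      (fun n : ℕ => ∑' k : ℕ,
        if nstar v n * (elln α v n - Real.log y) ≤ (k : ℝ)
          then θ k / (k : ℝ) * Real.exp (-(k : ℝ) * v n) else 0)
      atTop (𝓝 y) :=
  tail_sum_tendsto_general α hα θ hθ v hv y hy
end
end
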